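/- arXiv:2512.05654 — 3 statements merged into one kernel-verified Lean document; each statement's English description precedes it below -/
import Mathlib

section
/- Let N ≥ 1 and n ≥ 1, and let G be an undirected connected graph on nodes {1,…,N} with neighbor sets N_i. For each i let f_i : [0,∞) × ℝⁿ → ℝⁿ be continuous, continuously differentiable in its second argument, globally L_f-Lipschitz in the second argument uniformly in t, and uniformly bounded in t (i.e. sup_t ‖f_i(t,0)‖ < ∞). Define the blended dynamics vector field f̄(t,s) := (1/N) Σ_{i=1}^N f_i(t,s) and assume it is contractive: there exist a symmetric positive definite matrix H_c ∈ ℝ^{n×n} and λ_c > 0 such that H_c · D₂f̄(t,x) + D₂f̄(t,x)ᵀ · H_c ⪯ −λ_c H_c for all x ∈ ℝⁿ and t ≥ 0, where D₂f̄ denotes the Jacobian in the second argument. Then for every ε > 0 there exists k* > 0 such that for all k > k*, every family of functions x_i : [0,∞) → ℝⁿ satisfying ẋ_i(t) = f_i(t,x_i(t)) + k Σ_{p∈N_i}(x_p(t) − x_i(t)) for all t ≥ 0, together with every solution s : [0,∞) → ℝⁿ of ṡ(t) = f̄(t,s(t)), with arbitrary initial conditions, satisfies limsup_{t→∞} ‖x_i(t)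 − s(t)‖ ≤ ε for every i ∈ {1,…,N}. -/
open Filter Matrix
open scoped RealInnerProductSpace

/-!
Write `e i = x i - s` and split it into its average `c` and the disagreements `e i - c`, which
sum to zero. Along solutions, `V = ∑ i, ⟪e i, H_c e i⟫` satisfies `V' ≤ -a V + b / k`: the
contractivity of the blended field contracts `c`; the diffusive coupling dissipates the
disagreements at rate `k μ`, where `μ > 0` is the spectral gap of the connected graph; and the
heterogeneity `f i - f̄`, which averages to zero, only acts on the disagreements, where Young's
inequality lets the coupling absorb it up to an `O(1/k)` remainder. Every solution of the blended
dynamics eventually stays in a fixed ball (contractivity again), so the heterogeneity is uniformly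
bounded along `s`. A comparison argument then gives `limsup ‖x i - s‖ ^ 2 = O(1/k)`.
-/

theorem Submodule.exists_pos_mul_norm_sq_le {F : Type*} [NormedAddCommGroup F] [NormedSpace ℝ F]
    [FiniteDimensional ℝ F] (S : Submodule ℝ F) {q : F → ℝ} (hq : Continuous q)
    (hpos : ∀ v ∈ S, v ≠ 0 → 0 < q v) (hsmul : ∀ (c : ℝ) v, q (c • v) = c ^ 2 * q v) :
    ∃ m > 0, ∀ v ∈ S, m * ‖v‖ ^ 2 ≤ q v := by
  have hK : IsCompact ((S : Set F) ∩ Metric.sphere 0 1) :=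
    (isCompact_sphere 0 1).inter_left S.closed_of_finiteDimensional
  obtain ⟨m, hm, hmq⟩ := hK.exists_forall_le' hq.continuousOn (a := 0)
    fun v hv => hpos v hv.1 (ne_zero_of_mem_unit_sphere ⟨v, hv.2⟩)
  refine ⟨m, hm, fun v hv => ?_⟩
  rcases eq_or_ne v 0 with rfl | hv0
  · simp [show q 0 = 0 by simpa using hsmul 0 0]
  · have hnorm : 0 < ‖v‖ := norm_pos_iff.2 hv0
    have := hmq (‖v‖⁻¹ • v) ⟨S.smul_mem _ hv, by simp [norm_smul, hnorm.ne']⟩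
    rwa [hsmul, inv_pow, ← div_eq_inv_mul, le_div_iff₀ (by positivity)] at this

theorem two_mul_le_mul_sq_add_sq_div {θ : ℝ} (hθ : 0 < θ) (a b : ℝ) :
    2 * a * b ≤ θ * a ^ 2 + b ^ 2 / θ := by
  rw [← sub_nonneg, show θ * a ^ 2 + b ^ 2 / θ - 2 * a * b = (θ * a - b) ^ 2 / θ by
    field_simp; ring]
  positivity

theorem neg_two_mul_sq_add_le {α κ P Q R B D : ℝ} (hα : 0 < α) (hκ : 0 < κ)
    (h : α + Q + P ^ 2 / (4 * α) ≤ κ / 2) :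
    -2 * α * B ^ 2 + P * B * D + Q * D ^ 2 + R * D - κ * D ^ 2 ≤
      -α * (B ^ 2 + D ^ 2) + R ^ 2 / (2 * κ) := by
  have hP := two_mul_le_mul_sq_add_sq_div hα B (P * D / 2)
  have hR := two_mul_le_mul_sq_add_sq_div (half_pos hκ) D (R / 2)
  have hD := mul_le_mul_of_nonneg_right h (sq_nonneg D)
  have e1 : (P * D / 2) ^ 2 / α = P ^ 2 / (4 * α) * D ^ 2 := by field_simp; ring
  have e2 : (R / 2) ^ 2 / (κ / 2) = R ^ 2 / (2 * κ) := by field_simp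
  nlinarith

theorem eventually_le_div_add_of_hasDerivAt_le {V V' : ℝ → ℝ} {a b T δ : ℝ} (ha : 0 < a)
    (hδ : 0 < δ) (hV : ∀ t ≥ T, HasDerivAt V (V' t) t) (hV' : ∀ t ≥ T, V' t ≤ -a * V t + b) :
    ∀ᶠ t in atTop, V t ≤ b / a + δ := by
  let W t := (V t - b / a) * Real.exp (a * t)
  have hW : ∀ t ≥ T, HasDerivAt W ((V' t + a * V t - b) * Real.exp (a * t)) t := by
    intro t ht
    refine (((hV t ht).sub_const (b / a)).mul ((hasDerivAt_id t).const_mul a).exp).congr_deriv ?_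
    simp only [id]
    field_simp
    ring
  have hanti : AntitoneOn W (Set.Ici T) := by
    refine antitoneOn_of_deriv_nonpos (convex_Ici T)
      (fun t ht => (hW t ht).continuousAt.continuousWithinAt)
      (fun t ht => (hW t (interior_subset ht)).differentiableAt.differentiableWithinAt)
      fun t ht => ?_
    rw [(hW t (interior_subset ht)).deriv]
    exact mul_nonpos_of_nonpos_of_nonneg (by linarith [hV' t (interior_subset ht)]) (by positivity)
  have hdecay : Tendsto (fun t => W T * Real.exp (-(a * t))) atTop (nhds 0) := by
    simpa using (Real.tendsto_exp_neg_atTop_nhds_zero.comp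
      (tendsto_id.const_mul_atTop ha)).const_mul (W T)
  filter_upwards [hdecay.eventually (eventually_le_nhds hδ), eventually_ge_atTop T]
    with t hsmall ht
  have hWt : W t ≤ W T := hanti (Set.mem_Ici.2 le_rfl) ht ht
  have : V t - b / a ≤ W T * Real.exp (-(a * t)) :=
    calc V t - b / a = W t * Real.exp (-(a * t)) := by simp [W, mul_assoc, ← Real.exp_add]
      _ ≤ _ := mul_le_mul_of_nonneg_right hWt (Real.exp_pos _).le
  linarith

section Average

variable {ι E : Type*} [Fintype ι] [NormedAddCommGroup E] [NormedSpace ℝ E]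

theorem sum_sub_inv_card_smul_sum (v : ι → E) :
    ∑ i, (v i - (Fintype.card ι : ℝ)⁻¹ • ∑ j, v j) = 0 := by
  rcases isEmpty_or_nonempty ι with hι | hι
  · exact Fintype.sum_empty _
  · rw [Finset.sum_sub_distrib, Finset.sum_const, Finset.card_univ, ← Nat.cast_smul_eq_nsmul ℝ,
      smul_smul, mul_inv_cancel₀ (Nat.cast_ne_zero.2 Fintype.card_ne_zero), one_smul, sub_self]

theorem norm_inv_card_smul_sum_le {v : ι → E} {C : ℝ} (hC : 0 ≤ C) (hv : ∀ i, ‖v i‖ ≤ C) :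
    ‖(Fintype.card ι : ℝ)⁻¹ • ∑ i, v i‖ ≤ C := by
  rcases isEmpty_or_nonempty ι with hι | hι
  · simpa using hC
  · have hcard : (0 : ℝ) < Fintype.card ι := Nat.cast_pos.2 Fintype.card_pos
    rw [norm_smul, norm_inv, Real.norm_natCast, inv_mul_le_iff₀ hcard]
    simpa using norm_sum_le_of_le Finset.univ fun i _ => hv i

end Average

namespace SimpleGraph

theorem Preconnected.apply_eq_of_forall_adj {V α : Type*} {G : SimpleGraph V}
    (hG : G.Preconnected) {f : V → α} (hf : ∀ v w, G.Adj v w → f v = f w) (v w : V) :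
    f v = f w := by
  obtain ⟨p⟩ := hG v w
  induction p with
  | nil => rfl
  | cons h _ ih => exact (hf _ _ h).trans ih

variable {V : Type*} [Fintype V] (G : SimpleGraph V) [DecidableRel G.Adj]

theorem sum_sum_neighborFinset_comm {M : Type*} [AddCommMonoid M] (f : V → V → M) :
    ∑ v, ∑ w ∈ G.neighborFinset v, f v w = ∑ v, ∑ w ∈ G.neighborFinset v, f w v :=
  Finset.sum_comm' fun v w => by simp [G.adj_comm]

variable {G} in
theorem Connected.exists_pos_mul_sum_norm_sq_le (hG : G.Connected) (E : Type*)
    [NormedAddCommGroup E] [NormedSpace ℝ E] [FiniteDimensional ℝ E] :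
    ∃ μ > 0, ∀ d : V → E, ∑ v, d v = 0 →
      μ * ∑ v, ‖d v‖ ^ 2 ≤ ∑ v, ∑ w ∈ G.neighborFinset v, ‖d v - d w‖ ^ 2 := by
  have : Nonempty V := hG.nonempty
  have hcard : (0 : ℝ) < Fintype.card V := Nat.cast_pos.2 Fintype.card_pos
  let S := LinearMap.ker (∑ v, LinearMap.proj v : (V → E) →ₗ[ℝ] E)
  have hS : ∀ d, d ∈ S ↔ ∑ v, d v = 0 := by simp [S]
  -- on zero-sum tuples the Laplacian form only vanishes at `0`, as its zeros are constant
  have hpos : ∀ d ∈ S, d ≠ 0 → 0 < ∑ v, ∑ w ∈ G.neighborFinset v, ‖d v - d w‖ ^ 2 := by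
    intro d hd hd0
    refine (Finset.sum_nonneg fun v _ => Finset.sum_nonneg fun w _ => by positivity).lt_of_ne ?_
    intro hzero
    have hadj : ∀ v w, G.Adj v w → d v = d w := fun v w hvw => by
      have hv := (Finset.sum_eq_zero_iff_of_nonneg fun v _ =>
        Finset.sum_nonneg fun w _ => by positivity).1 hzero.symm v (Finset.mem_univ v)
      simpa [sub_eq_zero] using (Finset.sum_eq_zero_iff_of_nonneg fun w _ => by positivity).1 hv
        w ((G.mem_neighborFinset v w).2 hvw)
    have hconst := hG.preconnected.apply_eq_of_forall_adj hadj
    refine hd0 (funext fun v => ?_)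
    have hsum : (Fintype.card V : ℝ) • d v = 0 := by
      rw [← (hS d).1 hd, Finset.sum_congr rfl fun w _ => hconst w v]
      simp [Nat.cast_smul_eq_nsmul]
    exact (smul_eq_zero.1 hsum).resolve_left hcard.ne'
  obtain ⟨m, hm, hmq⟩ := S.exists_pos_mul_norm_sq_le (by fun_prop) hpos fun c d => by
    simp only [Finset.mul_sum, Pi.smul_apply, ← smul_sub, norm_smul, mul_pow, Real.norm_eq_abs,
      sq_abs]
  refine ⟨m / Fintype.card V, div_pos hm hcard, fun d hd => ?_⟩
  have hnorm : ∑ v, ‖d v‖ ^ 2 ≤ Fintype.card V * ‖d‖ ^ 2 := by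
    simpa using Finset.sum_le_sum fun v (_ : v ∈ Finset.univ) =>
      pow_le_pow_left₀ (norm_nonneg _) (norm_le_pi_norm d v) 2
  calc m / Fintype.card V * ∑ v, ‖d v‖ ^ 2 ≤ m * ‖d‖ ^ 2 := by
        rw [div_mul_eq_mul_div, div_le_iff₀ hcard]
        nlinarith
    _ ≤ _ := hmq d ((hS d).2 hd)

variable {E : Type*} [NormedAddCommGroup E] [InnerProductSpace ℝ E]

theorem sum_inner_sum_neighborFinset_sub (H : E →L[ℝ] E) (e : V → E) :
    ∑ v, ⟪e v, H (∑ w ∈ G.neighborFinset v, (e w - e v))⟫ =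
      -(1 / 2) * ∑ v, ∑ w ∈ G.neighborFinset v, ⟪e v - e w, H (e v - e w)⟫ := by
  have hpair : ∀ v w, ⟪e v - e w, H (e v - e w)⟫ = -⟪e v, H (e w - e v)⟫ - ⟪e w, H (e v - e w)⟫ :=
    fun v w => by simp only [map_sub, inner_sub_left, inner_sub_right]; ring
  have hswap := G.sum_sum_neighborFinset_comm fun v w => ⟪e v, H (e w - e v)⟫
  simp only [map_sum, inner_sum]
  simp only [hpair, Finset.sum_sub_distrib, Finset.sum_neg_distrib, ← hswap]
  ring

theorem sum_inner_sum_neighborFinset_sub_le {H : E →L[ℝ] E} {m μ : ℝ} (hm0 : 0 ≤ m)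
    (hm : ∀ v, m * ‖v‖ ^ 2 ≤ ⟪v, H v⟫)
    (hgap : ∀ d : V → E, ∑ v, d v = 0 →
      μ * ∑ v, ‖d v‖ ^ 2 ≤ ∑ v, ∑ w ∈ G.neighborFinset v, ‖d v - d w‖ ^ 2)
    (e : V → E) (c : E) (hc : ∑ v, (e v - c) = 0) :
    ∑ v, ⟪e v, H (∑ w ∈ G.neighborFinset v, (e w - e v))⟫ ≤
      -(m * μ / 2) * ∑ v, ‖e v - c‖ ^ 2 := by
  have hform : m * ∑ v, ∑ w ∈ G.neighborFinset v, ‖(e v - c) - (e w - c)‖ ^ 2 ≤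
      ∑ v, ∑ w ∈ G.neighborFinset v, ⟪e v - e w, H (e v - e w)⟫ := by
    simp only [Finset.mul_sum, sub_sub_sub_cancel_right]
    exact Finset.sum_le_sum fun v _ => Finset.sum_le_sum fun w _ => hm _
  rw [G.sum_inner_sum_neighborFinset_sub]
  nlinarith [mul_le_mul_of_nonneg_left (hgap _ hc) hm0]

end SimpleGraph

namespace Matrix

variable {ι : Type*} [Fintype ι] [DecidableEq ι]

theorem PosDef.inner_toEuclideanLin_pos {A : Matrix ι ι ℝ} (hA : A.PosDef)
    {v : EuclideanSpace ℝ ι} (hv : v ≠ 0) : 0 < ⟪v, toEuclideanLin A v⟫ := by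
  simpa [EuclideanSpace.inner_eq_star_dotProduct, dotProduct_comm] using
    hA.dotProduct_mulVec_pos (x := v.ofLp) (by simpa using hv)

theorem inner_toEuclideanLin_mul_le_of_posSemidef {A J : Matrix ι ι ℝ} {c : ℝ}
    (hA : A.IsHermitian) (h : (-(c • A) - (A * J + Jᵀ * A)).PosSemidef)
    (w : EuclideanSpace ℝ ι) :
    ⟪w, toEuclideanLin A (toEuclideanLin J w)⟫ ≤ -(c / 2) * ⟪w, toEuclideanLin A w⟫ := by
  have hAT : Aᵀ = A := by simpa using hA.eq
  have hsym : w.ofLp ⬝ᵥ Jᵀ *ᵥ A *ᵥ w.ofLp = w.ofLp ⬝ᵥ A *ᵥ J *ᵥ w.ofLp := by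
    rw [dotProduct_mulVec, vecMul_transpose, dotProduct_comm,
      dotProduct_mulVec w.ofLp A, ← mulVec_transpose, hAT]
  have := h.dotProduct_mulVec_nonneg w.ofLp
  simp only [star_trivial, sub_mulVec, add_mulVec, neg_mulVec, smul_mulVec, dotProduct_sub,
    dotProduct_add, dotProduct_neg, dotProduct_smul, smul_eq_mul, ← mulVec_mulVec, hsym] at this
  simp only [EuclideanSpace.inner_eq_star_dotProduct, toLpLin_apply, star_trivial,
    dotProduct_comm _ w.ofLp]
  linarith

end Matrix

section InnerMap

variable {E : Type*} [NormedAddCommGroup E] [InnerProductSpace ℝ E]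

theorem ContinuousLinearMap.inner_apply_le {H : E →L[ℝ] E} {M : ℝ} (hM : ‖H‖ ≤ M) (u v : E) :
    ⟪u, H v⟫ ≤ M * (‖u‖ * ‖v‖) :=
  calc ⟪u, H v⟫ ≤ ‖u‖ * (‖H‖ * ‖v‖) :=
        (real_inner_le_norm u (H v)).trans (by gcongr; exact H.le_opNorm v)
    _ ≤ M * (‖u‖ * ‖v‖) := by nlinarith [mul_nonneg (norm_nonneg u) (norm_nonneg v)]

theorem ContinuousLinearMap.exists_pos_mul_norm_sq_le_inner_apply_self [FiniteDimensional ℝ E]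
    (H : E →L[ℝ] E) (hpos : ∀ v ≠ 0, 0 < ⟪v, H v⟫) : ∃ m > 0, ∀ v, m * ‖v‖ ^ 2 ≤ ⟪v, H v⟫ := by
  obtain ⟨m, hm, h⟩ := (⊤ : Submodule ℝ E).exists_pos_mul_norm_sq_le (by fun_prop)
    (fun v _ => hpos v) fun c v => by
      simp only [map_smul, real_inner_smul_left, real_inner_smul_right]; ring
  exact ⟨m, hm, fun v => h v trivial⟩

theorem HasDerivAt.inner_apply_self {H : E →L[ℝ] E} (hH : (H : E →ₗ[ℝ] E).IsSymmetric)
    {e : ℝ → E} {e' : E} {t : ℝ} (he : HasDerivAt e e' t) :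
    HasDerivAt (fun τ => ⟪e τ, H (e τ)⟫) (2 * ⟪e t, H e'⟫) t := by
  refine (he.inner ℝ (H.hasFDerivAt.comp_hasDerivAt t he)).congr_deriv ?_
  have := hH e' (e t)
  simp only [ContinuousLinearMap.coe_coe] at this
  simp only [Function.comp_apply, ← this, real_inner_comm (e t)]
  ring

theorem inner_sub_map_sub_le_of_hasFDerivAt {F : E → E} {F' : E → E →L[ℝ] E} {H : E →L[ℝ] E}
    {c : ℝ} (hF : ∀ x, HasFDerivAt F (F' x) x) (hF' : ∀ x w, ⟪w, H (F' x w)⟫ ≤ c * ⟪w, H w⟫)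
    (u v : E) : ⟪u - v, H (F u - F v)⟫ ≤ c * ⟪u - v, H (u - v)⟫ := by
  let g (τ : ℝ) := ⟪u - v, H (F (v + τ • (u - v)))⟫
  have hg : ∀ τ, HasDerivAt g ⟪u - v, H (F' (v + τ • (u - v)) (u - v))⟫ τ := fun τ =>
    ((innerSL ℝ (u - v)).comp H).hasFDerivAt.comp_hasDerivAt τ
      ((hF _).comp_hasDerivAt τ (by simpa using ((hasDerivAt_id τ).smul_const (u - v)).const_add v))
  have := image_sub_le_mul_sub_of_deriv_le (fun τ => (hg τ).differentiableAt)
    (fun τ => (hg τ).deriv ▸ hF' _ _) zero_le_one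
  simpa [g, map_sub, inner_sub_right] using this

end InnerMap

section Coupled

variable {ι E : Type*} [Fintype ι] [NormedAddCommGroup E] [InnerProductSpace ℝ E]

theorem sum_inner_drift_le {H : E →L[ℝ] E} {M lam K : ℝ} {L : NNReal} (hHM : ‖H‖ ≤ M)
    {F : ι → E → E} {Fbar : E → E} (hF : ∀ i, LipschitzWith L (F i))
    (hFbar : ∀ y, ∑ i, (F i y - Fbar y) = 0)
    (hosl : ∀ u v, ⟪u - v, H (Fbar u - Fbar v)⟫ ≤ -(lam / 2) * ⟪u - v, H (u - v)⟫)
    (x : ι → E) (s c : E) (hc : ∑ i, (x i - s - c) = 0)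
    (hK : ∀ i, ‖F i (s + c) - Fbar (s + c)‖ ≤ 2 * L * ‖c‖ + K) :
    ∑ i, ⟪x i - s, H (F i (x i) - Fbar s)⟫ ≤ ∑ i, (-(lam / 2) * ⟪c, H c⟫ +
      M * (3 * L * ‖c‖ * ‖x i - s - c‖ + L * ‖x i - s - c‖ ^ 2 + K * ‖x i - s - c‖)) := by
  have hM : 0 ≤ M := (norm_nonneg H).trans hHM
  set y := s + c
  have hsplit : ∀ i, F i (x i) - Fbar s =
      (F i (x i) - F i y) + (F i y - Fbar y) + (Fbar y - Fbar s) := fun i => by abel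
  have hmean : ∑ i, ⟪x i - s, H (Fbar y - Fbar s)⟫ ≤ ∑ _i : ι, -(lam / 2) * ⟪c, H c⟫ := by
    have hsum : ∑ i, (x i - s) = (Fintype.card ι : ℝ) • c := by
      simpa [Finset.sum_sub_distrib, sub_eq_zero, Nat.cast_smul_eq_nsmul] using hc
    have := hosl y s
    rw [add_sub_cancel_left] at this
    rw [← sum_inner, hsum, real_inner_smul_left, Finset.sum_const, Finset.card_univ, nsmul_eq_mul]
    exact mul_le_mul_of_nonneg_left this (Nat.cast_nonneg _)
  have hhet : ∑ i, ⟪x i - s, H (F i y - Fbar y)⟫ = ∑ i, ⟪x i - s - c, H (F i y - Fbar y)⟫ := by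
    simp only [inner_sub_left, Finset.sum_sub_distrib, ← inner_sum, ← map_sum, hFbar,
      map_zero, inner_zero_right, sub_zero]
  have hterm : ∀ i, ⟪x i - s, H (F i (x i) - F i y)⟫ + ⟪x i - s - c, H (F i y - Fbar y)⟫ ≤
      M * (3 * L * ‖c‖ * ‖x i - s - c‖ + L * ‖x i - s - c‖ ^ 2 + K * ‖x i - s - c‖) := by
    intro i
    have hd : x i - y = x i - s - c := sub_add_eq_sub_sub _ _ _
    have h1 := H.inner_apply_le hHM (x i - s) (F i (x i) - F i y)
    have h2 := H.inner_apply_le hHM (x i - s - c) (F i y - Fbar y)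
    have hLip : ‖F i (x i) - F i y‖ ≤ L * ‖x i - s - c‖ := hd ▸ (hF i).norm_sub_le _ _
    have he : ‖x i - s‖ ≤ ‖c‖ + ‖x i - s - c‖ := by
      simpa using norm_add_le c (x i - s - c)
    have h3 : ‖x i - s‖ * ‖F i (x i) - F i y‖ ≤ (‖c‖ + ‖x i - s - c‖) * (L * ‖x i - s - c‖) :=
      mul_le_mul he hLip (norm_nonneg _) (by positivity)
    have h4 : ‖x i - s - c‖ * ‖F i y - Fbar y‖ ≤ ‖x i - s - c‖ * (2 * L * ‖c‖ + K) :=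
      mul_le_mul_of_nonneg_left (hK i) (norm_nonneg _)
    nlinarith [mul_le_mul_of_nonneg_left h3 hM, mul_le_mul_of_nonneg_left h4 hM]
  calc ∑ i, ⟪x i - s, H (F i (x i) - Fbar s)⟫
      = ∑ i, ⟪x i - s, H (Fbar y - Fbar s)⟫ +
          ∑ i, (⟪x i - s, H (F i (x i) - F i y)⟫ + ⟪x i - s - c, H (F i y - Fbar y)⟫) := by
        simp only [hsplit, map_add, inner_add_right, Finset.sum_add_distrib, hhet]
        ring
    _ ≤ _ := (add_le_add hmean (Finset.sum_le_sum fun i _ => hterm i)).trans_eq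
        Finset.sum_add_distrib.symm

theorem sum_inner_coupled_le (G : SimpleGraph ι) [DecidableRel G.Adj] {H : E →L[ℝ] E}
    {m M μ lam K k : ℝ} {L : NNReal} (hm0 : 0 < m) (hm : ∀ v, m * ‖v‖ ^ 2 ≤ ⟪v, H v⟫)
    (hHM : ‖H‖ ≤ M) (hM : 0 < M) (hμ : 0 < μ)
    (hgap : ∀ d : ι → E, ∑ i, d i = 0 →
      μ * ∑ i, ‖d i‖ ^ 2 ≤ ∑ i, ∑ j ∈ G.neighborFinset i, ‖d i - d j‖ ^ 2)
    (hlam : 0 < lam) {F : ι → E → E} {Fbar : E → E} (hF : ∀ i, LipschitzWith L (F i))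
    (hFbar : ∀ y, ∑ i, (F i y - Fbar y) = 0)
    (hosl : ∀ u v, ⟪u - v, H (Fbar u - Fbar v)⟫ ≤ -(lam / 2) * ⟪u - v, H (u - v)⟫)
    (x : ι → E) (s c : E) (hc : ∑ i, (x i - s - c) = 0)
    (hK : ∀ i, ‖F i (s + c) - Fbar (s + c)‖ ≤ 2 * L * ‖c‖ + K)
    -- the gain at which the coupling absorbs, by Young's inequality, the Lipschitz cross terms
    (hk : lam * m / 4 + M * L + (3 * M * L) ^ 2 / (lam * m) ≤ k * m * μ / 4) :
    ∑ i, ⟪x i - s, H (F i (x i) + k • ∑ j ∈ G.neighborFinset i, (x j - x i) - Fbar s)⟫ ≤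
      ∑ i, (-(lam * m / (8 * M)) * ⟪x i - s, H (x i - s)⟫ + (M * K) ^ 2 / (k * m * μ)) := by
  have hα : 0 < lam * m / 4 := by positivity
  have hκ : 0 < k * m * μ / 2 := by
    have : 0 ≤ (3 * M * L) ^ 2 / (lam * m) := by positivity
    nlinarith [mul_nonneg hM.le L.coe_nonneg]
  have hk0 : 0 ≤ k := by
    by_contra! hk0
    nlinarith [mul_pos (mul_pos hm0 hμ) (neg_pos.2 hk0)]
  have hdrift := sum_inner_drift_le hHM hF hFbar hosl x s c hc hK
  have hcoup := G.sum_inner_sum_neighborFinset_sub_le hm0.le hm hgap (fun i => x i - s) c hc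
  simp only [sub_sub_sub_cancel_right] at hcoup
  have hagent : ∀ i, -(lam / 2) * ⟪c, H c⟫ + M * (3 * L * ‖c‖ * ‖x i - s - c‖ +
      L * ‖x i - s - c‖ ^ 2 + K * ‖x i - s - c‖) - k * m * μ / 2 * ‖x i - s - c‖ ^ 2 ≤
      -(lam * m / (8 * M)) * ⟪x i - s, H (x i - s)⟫ + (M * K) ^ 2 / (k * m * μ) := by
    intro i
    have hyoung := neg_two_mul_sq_add_le hα hκ (P := 3 * M * L) (Q := M * L) (R := M * K)
      (B := ‖c‖) (D := ‖x i - s - c‖) (by field_simp at hk ⊢; linarith)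
    have hc' := mul_le_mul_of_nonneg_left (hm c) (half_pos hlam).le
    have he : ‖x i - s‖ ≤ ‖c‖ + ‖x i - s - c‖ := by simpa using norm_add_le c (x i - s - c)
    have hsq : ‖x i - s‖ * ‖x i - s‖ ≤ 2 * (‖c‖ ^ 2 + ‖x i - s - c‖ ^ 2) := by
      nlinarith [sq_nonneg (‖c‖ - ‖x i - s - c‖), mul_self_le_mul_self (norm_nonneg _) he]
    have hq : ⟪x i - s, H (x i - s)⟫ ≤ 2 * M * (‖c‖ ^ 2 + ‖x i - s - c‖ ^ 2) :=
      (H.inner_apply_le hHM _ _).trans (by nlinarith [mul_le_mul_of_nonneg_left hsq hM.le])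
    have hq' : lam * m / (8 * M) * ⟪x i - s, H (x i - s)⟫ ≤
        lam * m / 4 * (‖c‖ ^ 2 + ‖x i - s - c‖ ^ 2) := by
      calc _ ≤ lam * m / (8 * M) * (2 * M * (‖c‖ ^ 2 + ‖x i - s - c‖ ^ 2)) :=
            mul_le_mul_of_nonneg_left hq (by positivity)
        _ = _ := by field_simp; ring
    have hR : (M * K) ^ 2 / (2 * (k * m * μ / 2)) = (M * K) ^ 2 / (k * m * μ) := by ring
    nlinarith
  calc _
    _ = ∑ i, ⟪x i - s, H (F i (x i) - Fbar s)⟫ +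
        k * ∑ i, ⟪x i - s, H (∑ j ∈ G.neighborFinset i, (x j - x i))⟫ := by
      simp only [add_sub_right_comm, map_add, map_smul, inner_add_right, real_inner_smul_right,
        Finset.sum_add_distrib, Finset.mul_sum]
    _ ≤ _ := add_le_add hdrift (mul_le_mul_of_nonneg_left hcoup hk0)
    _ = ∑ i, (-(lam / 2) * ⟪c, H c⟫ + M * (3 * L * ‖c‖ * ‖x i - s - c‖ +
      L * ‖x i - s - c‖ ^ 2 + K * ‖x i - s - c‖) - k * m * μ / 2 * ‖x i - s - c‖ ^ 2) := by
      rw [Finset.mul_sum, Finset.mul_sum, ← Finset.sum_add_distrib]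
      exact Finset.sum_congr rfl fun i _ => by ring
    _ ≤ _ := Finset.sum_le_sum fun i _ => hagent i

end Coupled

section Dynamics

variable {E : Type*} [NormedAddCommGroup E] [InnerProductSpace ℝ E]

theorem exists_eventually_norm_le_of_inner_sub_map_sub_le {H : E →L[ℝ] E}
    (hH : (H : E →ₗ[ℝ] E).IsSymmetric) {m lam K₀ : ℝ} (hm0 : 0 < m)
    (hm : ∀ v, m * ‖v‖ ^ 2 ≤ ⟪v, H v⟫) (hlam : 0 < lam) {Fbar : ℝ → E → E}
    (hosl : ∀ t ≥ (0 : ℝ), ∀ u v,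
      ⟪u - v, H (Fbar t u - Fbar t v)⟫ ≤ -(lam / 2) * ⟪u - v, H (u - v)⟫)
    (hK₀ : ∀ t ≥ (0 : ℝ), ‖Fbar t 0‖ ≤ K₀) :
    ∃ R, ∀ s : ℝ → E, (∀ t ≥ (0 : ℝ), HasDerivAt s (Fbar t (s t)) t) →
      ∀ᶠ t in atTop, ‖s t‖ ≤ R := by
  refine ⟨√((4 * (‖H‖ * K₀) ^ 2 / (lam ^ 2 * m) + 1) / m), fun s hs => ?_⟩
  have hV' : ∀ t ≥ (0 : ℝ), 2 * ⟪s t, H (Fbar t (s t))⟫ ≤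
      -(lam / 2) * ⟪s t, H (s t)⟫ + 2 * (‖H‖ * K₀) ^ 2 / (lam * m) := by
    intro t ht
    have hcontr := hosl t ht (s t) 0
    rw [sub_zero, map_sub, inner_sub_right] at hcontr
    have hforce : ⟪s t, H (Fbar t 0)⟫ ≤ ‖H‖ * (‖s t‖ * K₀) :=
      (H.inner_apply_le le_rfl _ _).trans (by gcongr; exact hK₀ t ht)
    have hyoung := two_mul_le_mul_sq_add_sq_div (by positivity : 0 < lam * m / 2) ‖s t‖ (‖H‖ * K₀)
    have hb : (‖H‖ * K₀) ^ 2 / (lam * m / 2) = 2 * (‖H‖ * K₀) ^ 2 / (lam * m) := by ring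
    have hq := mul_le_mul_of_nonneg_left (hm (s t)) (half_pos hlam).le
    nlinarith
  filter_upwards [eventually_le_div_add_of_hasDerivAt_le (half_pos hlam) one_pos
    (fun t ht => (hs t ht).inner_apply_self hH) hV'] with t ht
  rw [Real.le_sqrt (norm_nonneg _) (by positivity), le_div_iff₀ hm0]
  have hb : 2 * (‖H‖ * K₀) ^ 2 / (lam * m) / (lam / 2) = 4 * (‖H‖ * K₀) ^ 2 / (lam ^ 2 * m) := by
    field_simp; ring
  linarith [hm (s t)]

theorem eventually_norm_sub_sq_le_of_coupled {ι : Type*} [Fintype ι] (G : SimpleGraph ι)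
    [DecidableRel G.Adj] {H : E →L[ℝ] E} (hH : (H : E →ₗ[ℝ] E).IsSymmetric)
    {m M μ lam K k : ℝ} {L : NNReal} (hm0 : 0 < m) (hm : ∀ v, m * ‖v‖ ^ 2 ≤ ⟪v, H v⟫)
    (hHM : ‖H‖ ≤ M) (hM : 0 < M) (hμ : 0 < μ)
    (hgap : ∀ d : ι → E, ∑ i, d i = 0 →
      μ * ∑ i, ‖d i‖ ^ 2 ≤ ∑ i, ∑ j ∈ G.neighborFinset i, ‖d i - d j‖ ^ 2)
    (hlam : 0 < lam) {f : ι → ℝ → E → E} {fbar : ℝ → E → E}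
    (hLip : ∀ i, ∀ t ≥ (0 : ℝ), LipschitzWith L (f i t))
    (hfbar : ∀ t y, fbar t y = (Fintype.card ι : ℝ)⁻¹ • ∑ i, f i t y)
    (hosl : ∀ t ≥ (0 : ℝ), ∀ u v,
      ⟪u - v, H (fbar t u - fbar t v)⟫ ≤ -(lam / 2) * ⟪u - v, H (u - v)⟫)
    (hk : lam * m / 4 + M * L + (3 * M * L) ^ 2 / (lam * m) ≤ k * m * μ / 4)
    {x : ι → ℝ → E} (hx : ∀ i, ∀ t ≥ (0 : ℝ), HasDerivAt (x i)
      (f i t (x i t) + k • ∑ p ∈ G.neighborFinset i, (x p t - x i t)) t)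
    {s : ℝ → E} (hs : ∀ t ≥ (0 : ℝ), HasDerivAt s (fbar t (s t)) t)
    (hK : ∀ᶠ t in atTop, ∀ i y, ‖f i t (s t + y) - fbar t (s t + y)‖ ≤ 2 * L * ‖y‖ + K)
    {δ : ℝ} (hδ : 0 < δ) :
    ∀ᶠ t in atTop, ∀ i,
      ‖x i t - s t‖ ^ 2 ≤ 8 * Fintype.card ι * M ^ 3 * K ^ 2 / (lam * m ^ 3 * μ) / k + δ := by
  obtain ⟨T, hT⟩ := eventually_atTop.1 (hK.and (eventually_ge_atTop 0))
  have hκ : 0 < k * m * μ := by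
    have : 0 ≤ (3 * M * L) ^ 2 / (lam * m) := by positivity
    nlinarith [mul_nonneg hM.le L.coe_nonneg, mul_pos hlam hm0]
  have ha : 0 < lam * m / (4 * M) := by positivity
  let V t := ∑ i, ⟪x i t - s t, H (x i t - s t)⟫
  have hV : ∀ t ≥ T, HasDerivAt V (∑ i, 2 * ⟪x i t - s t, H
      (f i t (x i t) + k • ∑ p ∈ G.neighborFinset i, (x p t - x i t) - fbar t (s t))⟫) t :=
    fun t ht => HasDerivAt.fun_sum fun i _ =>
      ((hx i t (hT t ht).2).sub (hs t (hT t ht).2)).inner_apply_self hH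
  have hV' : ∀ t ≥ T, ∑ i, 2 * ⟪x i t - s t, H
      (f i t (x i t) + k • ∑ p ∈ G.neighborFinset i, (x p t - x i t) - fbar t (s t))⟫ ≤
      -(lam * m / (4 * M)) * V t + 2 * Fintype.card ι * (M * K) ^ 2 / (k * m * μ) := by
    intro t ht
    have hc := sum_sub_inv_card_smul_sum fun i => x i t - s t
    have := sum_inner_coupled_le G hm0 hm hHM hM hμ hgap hlam (fun i => hLip i t (hT t ht).2)
      (fun y => hfbar t y ▸ sum_sub_inv_card_smul_sum _) (hosl t (hT t ht).2)
      (fun i => x i t) (s t) _ hc (fun i => (hT t ht).1 i _) hk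
    rw [← Finset.mul_sum]
    simp only [Finset.sum_add_distrib, ← Finset.mul_sum, Finset.sum_const, Finset.card_univ,
      nsmul_eq_mul] at this
    simp only [V]
    linear_combination 2 * this
  filter_upwards [eventually_le_div_add_of_hasDerivAt_le ha (by positivity : 0 < δ * m) hV hV']
    with t ht i
  have hq : m * ‖x i t - s t‖ ^ 2 ≤ V t := (hm _).trans <|
    Finset.single_le_sum (f := fun j => ⟪x j t - s t, H (x j t - s t)⟫)
      (fun j _ => (mul_nonneg hm0.le (sq_nonneg _)).trans (hm _)) (Finset.mem_univ i)
  have hk0 : k ≠ 0 := by rintro rfl; simp at hκ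
  have hba : 2 * Fintype.card ι * (M * K) ^ 2 / (k * m * μ) / (lam * m / (4 * M)) =
      m * (8 * Fintype.card ι * M ^ 3 * K ^ 2 / (lam * m ^ 3 * μ) / k) := by
    field_simp
    ring
  refine le_of_mul_le_mul_left ?_ hm0
  linarith

theorem exists_gain_eventually_norm_sub_sq_le [FiniteDimensional ℝ E] {ι : Type*} [Fintype ι]
    {G : SimpleGraph ι} [DecidableRel G.Adj] (hG : G.Connected) {H : E →L[ℝ] E}
    (hH : (H : E →ₗ[ℝ] E).IsSymmetric) (hpos : ∀ v ≠ 0, 0 < ⟪v, H v⟫) {lam K₀ : ℝ}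
    (hlam : 0 < lam) {f : ι → ℝ → E → E} {fbar : ℝ → E → E} {L : NNReal}
    (hLip : ∀ i, ∀ t ≥ (0 : ℝ), LipschitzWith L (f i t))
    (hK₀ : ∀ i, ∀ t ≥ (0 : ℝ), ‖f i t 0‖ ≤ K₀)
    (hfbar : ∀ t y, fbar t y = (Fintype.card ι : ℝ)⁻¹ • ∑ i, f i t y)
    (hosl : ∀ t ≥ (0 : ℝ), ∀ u v,
      ⟪u - v, H (fbar t u - fbar t v)⟫ ≤ -(lam / 2) * ⟪u - v, H (u - v)⟫) :
    ∃ k₁ > 0, ∃ C, ∀ k ≥ k₁, ∀ x : ι → ℝ → E, (∀ i, ∀ t ≥ (0 : ℝ), HasDerivAt (x i)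
        (f i t (x i t) + k • ∑ p ∈ G.neighborFinset i, (x p t - x i t)) t) →
      ∀ s : ℝ → E, (∀ t ≥ (0 : ℝ), HasDerivAt s (fbar t (s t)) t) →
        ∀ δ > 0, ∀ᶠ t in atTop, ∀ i, ‖x i t - s t‖ ^ 2 ≤ C / k + δ := by
  obtain ⟨m, hm0, hm⟩ := H.exists_pos_mul_norm_sq_le_inner_apply_self hpos
  obtain ⟨μ, hμ, hgap⟩ := hG.exists_pos_mul_sum_norm_sq_le E
  have : Nonempty ι := hG.nonempty
  have hK₀0 : 0 ≤ K₀ := (norm_nonneg _).trans (hK₀ (Classical.arbitrary ι) 0 le_rfl)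
  have hf : ∀ i, ∀ t ≥ (0 : ℝ), ∀ y, ‖f i t y‖ ≤ L * ‖y‖ + K₀ := fun i t ht y => by
    have := (hLip i t ht).norm_sub_le y 0
    rw [sub_zero] at this
    linarith [norm_le_norm_sub_add (f i t y) (f i t 0), hK₀ i t ht]
  have hfbar' : ∀ t ≥ (0 : ℝ), ∀ y, ‖fbar t y‖ ≤ L * ‖y‖ + K₀ := fun t ht y =>
    hfbar t y ▸ norm_inv_card_smul_sum_le (by positivity) fun i => hf i t ht y
  obtain ⟨R, hR⟩ := exists_eventually_norm_le_of_inner_sub_map_sub_le hH hm0 hm hlam hosl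
    fun t ht => by simpa using hfbar' t ht 0
  -- `‖H‖ + 1` rather than `‖H‖`, which vanishes when `E` is trivial
  have hM : 0 < ‖H‖ + 1 := by positivity
  refine ⟨4 * (lam * m / 4 + (‖H‖ + 1) * L + (3 * (‖H‖ + 1) * L) ^ 2 / (lam * m)) / (m * μ),
    by positivity, 8 * Fintype.card ι * (‖H‖ + 1) ^ 3 * (2 * (L * R + K₀)) ^ 2 / (lam * m ^ 3 * μ),
    fun k hk x hx s hs δ hδ => ?_⟩
  refine eventually_norm_sub_sq_le_of_coupled G hH hm0 hm (le_add_of_nonneg_right zero_le_one) hM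
    hμ hgap hlam hLip hfbar hosl ?_ hx hs ?_ hδ
  · rw [ge_iff_le, div_le_iff₀ (by positivity)] at hk
    linarith
  · filter_upwards [hR s hs, eventually_ge_atTop 0] with t hst ht i y
    calc ‖f i t (s t + y) - fbar t (s t + y)‖
        ≤ ‖f i t (s t + y)‖ + ‖fbar t (s t + y)‖ := norm_sub_le _ _
      _ ≤ 2 * (L * ‖s t + y‖ + K₀) := by linarith [hf i t ht (s t + y), hfbar' t ht (s t + y)]
      _ ≤ 2 * L * ‖y‖ + 2 * (L * R + K₀) := by
        nlinarith [norm_add_le (s t) y, L.coe_nonneg]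

end Dynamics

theorem stmt_0_general (N n : ℕ)
    (G : SimpleGraph (Fin N)) [DecidableRel G.Adj] (hG : G.Connected)
    (f : Fin N → ℝ → EuclideanSpace ℝ (Fin n) → EuclideanSpace ℝ (Fin n))
    (Lf : NNReal)
    (hLip : ∀ i, ∀ t ≥ (0:ℝ), LipschitzWith Lf (f i t))
    (hbdd : ∀ i, ∃ M : ℝ, ∀ t ≥ (0:ℝ), ‖f i t 0‖ ≤ M)
    (fbar : ℝ → EuclideanSpace ℝ (Fin n) → EuclideanSpace ℝ (Fin n))
    (hfbar : ∀ t x, fbar t x = (N : ℝ)⁻¹ • ∑ i, f i t x)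
    -- `J t x` is the Jacobian of the blended dynamics in its second argument
    (J : ℝ → EuclideanSpace ℝ (Fin n) → Matrix (Fin n) (Fin n) ℝ)
    (hJ : ∀ t ≥ (0:ℝ), ∀ x, HasFDerivAt (fbar t)
      (LinearMap.toContinuousLinearMap (Matrix.toEuclideanLin (J t x))) x)
    -- contractivity: `H_c J + Jᵀ H_c ⪯ −λ_c H_c`
    (Hc : Matrix (Fin n) (Fin n) ℝ) (lamc : ℝ)
    (hHc : Hc.PosDef) (hlamc : 0 < lamc)
    (hcontr : ∀ t ≥ (0:ℝ), ∀ x,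
      (-(lamc • Hc) - (Hc * J t x + (J t x)ᵀ * Hc)).PosSemidef) :
    ∀ ε > (0:ℝ), ∃ kstar > (0:ℝ), ∀ k > kstar,
      ∀ x : Fin N → ℝ → EuclideanSpace ℝ (Fin n),
        (∀ i, ∀ t ≥ (0:ℝ), HasDerivAt (x i)
          (f i t (x i t) + k • ∑ p ∈ G.neighborFinset i, (x p t - x i t)) t) →
        ∀ s : ℝ → EuclideanSpace ℝ (Fin n),
          (∀ t ≥ (0:ℝ), HasDerivAt s (fbar t (s t)) t) →
          ∀ i, Filter.limsup (fun t => ‖x i t - s t‖) Filter.atTop ≤ ε := by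
  intro ε hε
  let H := LinearMap.toContinuousLinearMap (toEuclideanLin Hc)
  have hH : (toEuclideanLin Hc).IsSymmetric := isSymmetric_toEuclideanLin_iff.2 hHc.isHermitian
  have hpos : ∀ v ≠ 0, 0 < ⟪v, H v⟫ := fun v hv => hHc.inner_toEuclideanLin_pos hv
  obtain ⟨K₀, hK₀⟩ : ∃ K₀, ∀ i, ∀ t ≥ (0 : ℝ), ‖f i t 0‖ ≤ K₀ := by
    choose B hB using hbdd
    obtain ⟨K₀, hK₀⟩ := Finite.exists_le B
    exact ⟨K₀, fun i t ht => (hB i t ht).trans (hK₀ i)⟩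
  have hosl : ∀ t ≥ (0 : ℝ), ∀ u v,
      ⟪u - v, H (fbar t u - fbar t v)⟫ ≤ -(lamc / 2) * ⟪u - v, H (u - v)⟫ := fun t ht =>
    inner_sub_map_sub_le_of_hasFDerivAt (hJ t ht) fun x w =>
      inner_toEuclideanLin_mul_le_of_posSemidef hHc.isHermitian (hcontr t ht x) w
  obtain ⟨k₁, hk₁, C, hC⟩ := exists_gain_eventually_norm_sub_sq_le hG hH hpos hlamc hLip hK₀
    (by simpa using hfbar) hosl
  refine ⟨max k₁ (2 * C / ε ^ 2), lt_max_of_lt_left hk₁, fun k hk x hx s hs i => ?_⟩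
  have hk₁k : k₁ ≤ k := (le_max_left _ _).trans hk.le
  have hCk : C / k ≤ ε ^ 2 / 2 := by
    have := (le_max_right _ _).trans_lt hk
    rw [div_lt_iff₀ (by positivity)] at this
    rw [div_le_iff₀ (hk₁.trans_le hk₁k)]
    linarith
  refine limsup_le_of_le (isCoboundedUnder_le_of_le atTop fun t => norm_nonneg _) ?_
  filter_upwards [hC k hk₁k x hx s hs (ε ^ 2 / 2) (by positivity)] with t ht
  exact (pow_le_pow_iff_left₀ (norm_nonneg _) hε.le two_ne_zero).1 (by linarith [ht i])

/-- Proposition 1 (blended dynamics theory): practical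
synchronization of diffusively coupled heterogeneous agents under
contractivity of the blended dynamics. -/
theorem stmt_0 (N n : ℕ) (hN : 1 ≤ N) (hn : 1 ≤ n)
    (G : SimpleGraph (Fin N)) [DecidableRel G.Adj] (hG : G.Connected)
    (f : Fin N → ℝ → EuclideanSpace ℝ (Fin n) → EuclideanSpace ℝ (Fin n))
    (Lf : NNReal)
    (hcont : ∀ i, ContinuousOn (fun q : ℝ × EuclideanSpace ℝ (Fin n) => f i q.1 q.2)
      (Set.Ici 0 ×ˢ Set.univ))
    (hC1 : ∀ i, ∀ t ≥ (0:ℝ), ContDiff ℝ 1 (f i t))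
    (hLip : ∀ i, ∀ t ≥ (0:ℝ), LipschitzWith Lf (f i t))
    (hbdd : ∀ i, ∃ M : ℝ, ∀ t ≥ (0:ℝ), ‖f i t 0‖ ≤ M)
    (fbar : ℝ → EuclideanSpace ℝ (Fin n) → EuclideanSpace ℝ (Fin n))
    (hfbar : ∀ t x, fbar t x = (N : ℝ)⁻¹ • ∑ i, f i t x)
    -- `J t x` is the Jacobian of the blended dynamics in its second argument
    (J : ℝ → EuclideanSpace ℝ (Fin n) → Matrix (Fin n) (Fin n) ℝ)
    (hJ : ∀ t ≥ (0:ℝ), ∀ x, HasFDerivAt (fbar t)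
      (LinearMap.toContinuousLinearMap (Matrix.toEuclideanLin (J t x))) x)
    -- contractivity: `H_c J + Jᵀ H_c ⪯ −λ_c H_c`
    (Hc : Matrix (Fin n) (Fin n) ℝ) (lamc : ℝ)
    (hHc : Hc.PosDef) (hHcsymm : Hc.IsSymm) (hlamc : 0 < lamc)
    (hcontr : ∀ t ≥ (0:ℝ), ∀ x,
      (-(lamc • Hc) - (Hc * J t x + (J t x)ᵀ * Hc)).PosSemidef) :
    ∀ ε > (0:ℝ), ∃ kstar > (0:ℝ), ∀ k > kstar,
      ∀ x : Fin N → ℝ → EuclideanSpace ℝ (Fin n),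
        (∀ i, ∀ t ≥ (0:ℝ), HasDerivAt (x i)
          (f i t (x i t) + k • ∑ p ∈ G.neighborFinset i, (x p t - x i t)) t) →
        ∀ s : ℝ → EuclideanSpace ℝ (Fin n),
          (∀ t ≥ (0:ℝ), HasDerivAt s (fbar t (s t)) t) →
          ∀ i, Filter.limsup (fun t => ‖x i t - s t‖) Filter.atTop ≤ ε :=
  stmt_0_general N n G hG f Lf hLip hbdd fbar hfbar J hJ Hc lamc hHc hlamc hcontr
end

section
/- Let n_x, n_y ≥ 1, p > 0, a ∈ ℝ with a ≠ 0, g ≥ 0 and h ≥ 0. For κ ∈ ℝ and x ∈ ℝ^{n_x}, y ∈ ℝ^{n_y} define ρ_κ(x,y) := −p‖x‖² − 2a‖x‖‖y‖ − κ‖y‖² + g‖x‖ + h‖y‖. Then for every κ > p/3 + 3a²/p there exist a constant c > 0 and a strictly increasing continuous function r : (0, 1/(p/3 + 3a²/p)) → (0,∞) with r(σ) → 0 as σ → 0⁺, both depending only on p and a, such that for all x, y: if ‖x‖² + ‖y‖² > max( c g², h² r(1/κ) ), then ρ_κ(x,y) ≤ −(p/3)(‖x‖² + ‖y‖²). -/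
/-!
With `X = ‖x‖`, `Y = ‖y‖`, `S = X² + Y²` and `κ = κ₀ + E`, where `κ₀ = p/3 + 3a²/p`,
`ρ_κ + (p/3) S = -(2p/3 X² + 2aXY + 3a²/p Y²) - E Y² + gX + hY`.
The quadratic form in brackets has determinant `2a² - a² = a² > 0`, so it dominates `L S`
with `L = coercivity p a > 0`. By Young's inequality `gX ≤ (L/2) S` once `S > 4g²/L²`,
and `hY ≤ E Y² + (L/2) S` once `S > h²/(2LE) = h² r(1/κ)`, where
`r σ = σ / (2L (1 - κ₀ σ))`.
-/

open Set Filter Topology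

lemma mul_le_mul_sq_add_sq_div {ε : ℝ} (hε : 0 < ε) (g X : ℝ) :
    g * X ≤ ε * X ^ 2 + g ^ 2 / (4 * ε) := by
  rw [← sub_nonneg]
  have key : ε * X ^ 2 + g ^ 2 / (4 * ε) - g * X = (2 * ε * X - g) ^ 2 / (4 * ε) := by
    field_simp
    ring
  rw [key]
  positivity

/-- Determinant over trace is at most the smallest eigenvalue; `(α + γ)` times the gap is
`(αX + βY)² + (βX + γY)²`. -/
lemma det_div_trace_mul_le_quadratic_form {α β γ : ℝ} (hαγ : 0 < α + γ) (X Y : ℝ) :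
    (α * γ - β ^ 2) / (α + γ) * (X ^ 2 + Y ^ 2) ≤
      α * X ^ 2 + 2 * β * X * Y + γ * Y ^ 2 := by
  rw [div_mul_eq_mul_div, div_le_iff₀ hαγ]
  nlinarith [sq_nonneg (α * X + β * Y), sq_nonneg (β * X + γ * Y)]

section ClassKGain

noncomputable def classKGain (m K σ : ℝ) : ℝ := σ / (m * (1 - K * σ))

variable {m K : ℝ}

lemma one_sub_mul_pos_of_mem_Ioo (hK : 0 < K) {σ : ℝ} (hσ : σ ∈ Ioo 0 (1 / K)) :
    0 < 1 - K * σ := by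
  have := (lt_div_iff₀' hK).1 hσ.2
  linarith

lemma classKGain_pos (hm : 0 < m) (hK : 0 < K) {σ : ℝ} (hσ : σ ∈ Ioo 0 (1 / K)) :
    0 < classKGain m K σ :=
  div_pos hσ.1 (mul_pos hm (one_sub_mul_pos_of_mem_Ioo hK hσ))

lemma strictMonoOn_classKGain (hm : 0 < m) (hK : 0 < K) :
    StrictMonoOn (classKGain m K) (Ioo 0 (1 / K)) := by
  intro s hs t ht hst
  have hs' := one_sub_mul_pos_of_mem_Ioo hK hs
  have ht' := one_sub_mul_pos_of_mem_Ioo hK ht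
  rw [classKGain, classKGain, div_lt_div_iff₀ (by positivity) (by positivity)]
  nlinarith

lemma continuousOn_classKGain (hm : 0 < m) (hK : 0 < K) :
    ContinuousOn (classKGain m K) (Ioo 0 (1 / K)) :=
  continuousOn_id.div (by fun_prop) fun _ hσ =>
    (mul_pos hm (one_sub_mul_pos_of_mem_Ioo hK hσ)).ne'

lemma tendsto_classKGain_zero (hm : 0 < m) :
    Tendsto (classKGain m K) (𝓝[>] 0) (𝓝 0) := by
  have hcont : ContinuousAt (classKGain m K) 0 :=
    continuousAt_id.div (by fun_prop) (by simpa using hm.ne')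
  simpa [classKGain] using hcont.tendsto.mono_left nhdsWithin_le_nhds

lemma classKGain_one_div {κ : ℝ} (hK : K < κ) (hκ : 0 < κ) :
    classKGain m K (1 / κ) = 1 / (m * (κ - K)) := by
  have : κ - K ≠ 0 := sub_ne_zero.2 hK.ne'
  rw [classKGain]
  field_simp

end ClassKGain

/-- Determinant over trace of the form `2p/3 X² + 2aXY + 3a²/p Y²`. -/
noncomputable def coercivity (p a : ℝ) : ℝ := a ^ 2 / (2 * p / 3 + 3 * a ^ 2 / p)

lemma coercivity_pos {p a : ℝ} (hp : 0 < p) (ha : a ≠ 0) : 0 < coercivity p a := by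
  unfold coercivity
  positivity

lemma coercivity_mul_le {p a : ℝ} (hp : 0 < p) (X Y : ℝ) :
    coercivity p a * (X ^ 2 + Y ^ 2) ≤
      2 * p / 3 * X ^ 2 + 2 * a * X * Y + 3 * a ^ 2 / p * Y ^ 2 := by
  have hdet : 2 * p / 3 * (3 * a ^ 2 / p) - a ^ 2 = a ^ 2 := by
    field_simp
    ring
  have htrace : 0 < 2 * p / 3 + 3 * a ^ 2 / p := by positivity
  have := det_div_trace_mul_le_quadratic_form (β := a) htrace X Y
  rwa [hdet] at this

lemma mul_le_half_mul_of_lt {L S g X : ℝ} (hL : 0 < L) (hX : X ^ 2 ≤ S)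
    (hg : 4 / L ^ 2 * g ^ 2 < S) :
    g * X ≤ L / 2 * S := by
  have hg' : g ^ 2 / L ≤ L / 4 * S := by
    rw [div_le_iff₀ hL]
    rw [div_mul_eq_mul_div, div_lt_iff₀ (by positivity)] at hg
    nlinarith
  calc g * X ≤ L / 4 * X ^ 2 + g ^ 2 / (4 * (L / 4)) :=
        mul_le_mul_sq_add_sq_div (by positivity) g X
    _ ≤ L / 4 * S + L / 4 * S := by
      rw [show 4 * (L / 4) = L by ring]
      gcongr
    _ = L / 2 * S := by ring

lemma mul_le_mul_sq_add_half_mul_of_lt {L S E h Y : ℝ} (hL : 0 < L) (hE : 0 < E)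
    (hh : h ^ 2 * (1 / (2 * L * E)) < S) :
    h * Y ≤ E * Y ^ 2 + L / 2 * S := by
  have hh' : h ^ 2 / (4 * E) ≤ L / 2 * S := by
    rw [mul_one_div, div_lt_iff₀ (by positivity)] at hh
    rw [div_le_iff₀ (by positivity)]
    nlinarith
  linarith [mul_le_mul_sq_add_sq_div hE h Y]

lemma rho_le_neg_third_mul {p a E g h X Y : ℝ} (hp : 0 < p) (hL : 0 < coercivity p a)
    (hE : 0 < E) (hg : 4 / coercivity p a ^ 2 * g ^ 2 < X ^ 2 + Y ^ 2)
    (hh : h ^ 2 * (1 / (2 * coercivity p a * E)) < X ^ 2 + Y ^ 2) :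
    -p * X ^ 2 - 2 * a * X * Y - (p / 3 + 3 * a ^ 2 / p + E) * Y ^ 2 + g * X + h * Y
      ≤ -(p / 3) * (X ^ 2 + Y ^ 2) := by
  have hQ := coercivity_mul_le (a := a) hp X Y
  have hgX := mul_le_half_mul_of_lt hL (by nlinarith) hg
  have hhY := mul_le_mul_sq_add_half_mul_of_lt hL (Y := Y) hE hh
  linear_combination hQ + hgX + hhY

theorem stmt_5_general (nx ny : ℕ)
    (p a : ℝ) (hp : 0 < p) (ha : a ≠ 0) :
    ∃ c > (0:ℝ), ∃ r : ℝ → ℝ,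
      StrictMonoOn r (Set.Ioo 0 (1 / (p / 3 + 3 * a ^ 2 / p))) ∧
      ContinuousOn r (Set.Ioo 0 (1 / (p / 3 + 3 * a ^ 2 / p))) ∧
      (∀ σ ∈ Set.Ioo (0:ℝ) (1 / (p / 3 + 3 * a ^ 2 / p)), 0 < r σ) ∧
      Filter.Tendsto r (nhdsWithin 0 (Set.Ioi 0)) (nhds 0) ∧
      ∀ g ≥ (0:ℝ), ∀ h ≥ (0:ℝ), ∀ κ : ℝ, p / 3 + 3 * a ^ 2 / p < κ →
        ∀ (x : EuclideanSpace ℝ (Fin nx)) (y : EuclideanSpace ℝ (Fin ny)),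
          max (c * g ^ 2) (h ^ 2 * r (1 / κ)) < ‖x‖ ^ 2 + ‖y‖ ^ 2 →
          -p * ‖x‖ ^ 2 - 2 * a * ‖x‖ * ‖y‖ - κ * ‖y‖ ^ 2 + g * ‖x‖ + h * ‖y‖
            ≤ -(p / 3) * (‖x‖ ^ 2 + ‖y‖ ^ 2) := by
  have hL := coercivity_pos hp ha
  have hK : 0 < p / 3 + 3 * a ^ 2 / p := by positivity
  have hm : 0 < 2 * coercivity p a := by positivity
  refine ⟨4 / coercivity p a ^ 2, by positivity, classKGain (2 * coercivity p a) _,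
    strictMonoOn_classKGain hm hK, continuousOn_classKGain hm hK,
    fun σ hσ => classKGain_pos hm hK hσ, tendsto_classKGain_zero hm, ?_⟩
  intro g _ h _ κ hκ x y hxy
  rw [max_lt_iff, classKGain_one_div hκ (hK.trans hκ)] at hxy
  obtain ⟨E, hE, rfl⟩ : ∃ E, 0 < E ∧ κ = p / 3 + 3 * a ^ 2 / p + E :=
    ⟨κ - (p / 3 + 3 * a ^ 2 / p), by linarith, by ring⟩
  refine rho_le_neg_third_mul hp hL hE hxy.1 ?_
  simpa only [add_sub_cancel_left] using hxy.2

/-- the technical Lemma 2 (Appendix A). The constant `c` and the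
class-`K` function `r` depend only on `p` and `a` (they are chosen before
`g`, `h` and `κ`). -/
theorem stmt_5 (nx ny : ℕ) (hnx : 1 ≤ nx) (hny : 1 ≤ ny)
    (p a : ℝ) (hp : 0 < p) (ha : a ≠ 0) :
    ∃ c > (0:ℝ), ∃ r : ℝ → ℝ,
      StrictMonoOn r (Set.Ioo 0 (1 / (p / 3 + 3 * a ^ 2 / p))) ∧
      ContinuousOn r (Set.Ioo 0 (1 / (p / 3 + 3 * a ^ 2 / p))) ∧
      (∀ σ ∈ Set.Ioo (0:ℝ) (1 / (p / 3 + 3 * a ^ 2 / p)), 0 < r σ) ∧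
      Filter.Tendsto r (nhdsWithin 0 (Set.Ioi 0)) (nhds 0) ∧
      ∀ g ≥ (0:ℝ), ∀ h ≥ (0:ℝ), ∀ κ : ℝ, p / 3 + 3 * a ^ 2 / p < κ →
        ∀ (x : EuclideanSpace ℝ (Fin nx)) (y : EuclideanSpace ℝ (Fin ny)),
          max (c * g ^ 2) (h ^ 2 * r (1 / κ)) < ‖x‖ ^ 2 + ‖y‖ ^ 2 →
          -p * ‖x‖ ^ 2 - 2 * a * ‖x‖ * ‖y‖ - κ * ‖y‖ ^ 2 + g * ‖x‖ + h * ‖y‖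
            ≤ -(p / 3) * (‖x‖ ^ 2 + ‖y‖ ^ 2) :=
  stmt_5_general nx ny p a hp ha
end

section
/- Let n_x, n_y ≥ 1, p > 0, a ∈ ℝ, g ≥ 0, h ≥ 0, and κ > p/3 + 3a²/p. For x ∈ ℝ^{n_x}, y ∈ ℝ^{n_y} define ρ_κ(x,y) := −p‖x‖² − 2a‖x‖‖y‖ − κ‖y‖² + g‖x‖ + h‖y‖, X := ‖x‖ + (3a/p)‖y‖, ζ(κ) := κ − p/3 − 3a²/p, Ξ := (‖x‖, X/√2) ∈ ℝ² and Υ := ( √((p/6)/ζ(κ)) X, ‖y‖ ) ∈ ℝ². If ‖Ξ‖ ≥ (3/p) g and ‖Υ‖ ≥ h/ζ(κ), then ρ_κ(x,y) ≤ −(p/3)(‖x‖² + ‖y‖²). -/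
lemma stmt9_norm2 (a b : ℝ) :
    ‖((WithLp.equiv 2 (Fin 2 → ℝ)).symm ![a, b] : EuclideanSpace ℝ (Fin 2))‖
      = Real.sqrt (a ^ 2 + b ^ 2) := by
  rw [EuclideanSpace.norm_eq]
  simp [Fin.sum_univ_two, Real.norm_eq_abs, sq_abs]

lemma stmt9_core (p a g h κ u v X N1 N2 ζ : ℝ)
    (hp : 0 < p) (hg : 0 ≤ g) (hh : 0 ≤ h) (hζ : 0 < ζ)
    (hX : X = u + 3 * a / p * v) (hζdef : ζ = κ - p / 3 - 3 * a ^ 2 / p)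
    (hN1nn : 0 ≤ N1) (hN2nn : 0 ≤ N2)
    (hN1sq : N1 ^ 2 = u ^ 2 + X ^ 2 / 2)
    (hN2sq : ζ * N2 ^ 2 = p / 6 * X ^ 2 + ζ * v ^ 2)
    (h1 : 3 / p * g ≤ N1) (h2 : h / ζ ≤ N2) :
    -p * u ^ 2 - 2 * a * u * v - κ * v ^ 2 + g * u + h * v ≤ -(p / 3) * (u ^ 2 + v ^ 2) := by
  have h1' : 3 * g ≤ p * N1 := by
    rw [div_mul_eq_mul_div, div_le_iff₀ hp] at h1; linarith
  have h2' : h ≤ ζ * N2 := by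
    rw [div_le_iff₀ hζ] at h2; linarith
  have huN1 : u ≤ N1 := by nlinarith
  have hv2 : ζ * v ^ 2 ≤ ζ * N2 ^ 2 := by nlinarith [sq_nonneg X]
  have hvsq : v ^ 2 ≤ N2 ^ 2 := le_of_mul_le_mul_left hv2 hζ
  have hvN2 : v ≤ N2 := by nlinarith
  have hgu : g * u ≤ p / 3 * N1 ^ 2 := by
    nlinarith [mul_le_mul_of_nonneg_right h1' hN1nn, mul_nonneg hg (sub_nonneg.mpr huN1)]
  have hhv : h * v ≤ ζ * N2 ^ 2 := by
    nlinarith [mul_le_mul_of_nonneg_right h2' hN2nn, mul_nonneg hh (sub_nonneg.mpr hvN2)]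
  have hid : -p * u ^ 2 - 2 * a * u * v - κ * v ^ 2 + (p / 3) * (u ^ 2 + v ^ 2)
      = -(p / 3) * u ^ 2 - (p / 3) * X ^ 2 - ζ * v ^ 2 := by
    rw [hX, hζdef]; field_simp; ring
  have hgu' : g * u ≤ p / 3 * u ^ 2 + p / 6 * X ^ 2 := by rw [hN1sq] at hgu; linarith
  rw [hN2sq] at hhv
  linarith

/-- conditional decrease, the central step of the proof of Lemma 2 (Appendix A). -/
theorem stmt_9 (nx ny : ℕ) (hnx : 1 ≤ nx) (hny : 1 ≤ ny)
    (p a g h κ : ℝ) (hp : 0 < p) (hg : 0 ≤ g) (hh : 0 ≤ h)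
    (hκ : p / 3 + 3 * a ^ 2 / p < κ)
    (x : EuclideanSpace ℝ (Fin nx)) (y : EuclideanSpace ℝ (Fin ny))
    (hΞ : (3 / p) * g ≤
      ‖((WithLp.equiv 2 (Fin 2 → ℝ)).symm
          ![‖x‖, (‖x‖ + (3 * a / p) * ‖y‖) / Real.sqrt 2] : EuclideanSpace ℝ (Fin 2))‖)
    (hΥ : h / (κ - p / 3 - 3 * a ^ 2 / p) ≤
      ‖((WithLp.equiv 2 (Fin 2 → ℝ)).symm
          ![Real.sqrt ((p / 6) / (κ - p / 3 - 3 * a ^ 2 / p)) * (‖x‖ + (3 * a / p) * ‖y‖),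
            ‖y‖] : EuclideanSpace ℝ (Fin 2))‖) :
    -p * ‖x‖ ^ 2 - 2 * a * ‖x‖ * ‖y‖ - κ * ‖y‖ ^ 2 + g * ‖x‖ + h * ‖y‖
      ≤ -(p / 3) * (‖x‖ ^ 2 + ‖y‖ ^ 2) := by
  rw [stmt9_norm2] at hΞ hΥ
  have hζ : (0:ℝ) < κ - p / 3 - 3 * a ^ 2 / p := by linarith
  set u := ‖x‖
  set v := ‖y‖
  set X := u + 3 * a / p * v with hXdef
  set ζ := κ - p / 3 - 3 * a ^ 2 / p with hζdef
  have hsq2 : (Real.sqrt 2) ^ 2 = 2 := Real.sq_sqrt (by norm_num)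
  have hs2 : (Real.sqrt ((p / 6) / ζ)) ^ 2 = (p / 6) / ζ :=
    Real.sq_sqrt (by positivity)
  have e1 : u ^ 2 + ((u + 3 * a / p * v) / Real.sqrt 2) ^ 2 = u ^ 2 + X ^ 2 / 2 := by
    rw [div_pow, hsq2, hXdef]
  have e2 : (Real.sqrt ((p / 6) / ζ) * (u + 3 * a / p * v)) ^ 2 + v ^ 2
      = (p / 6) / ζ * X ^ 2 + v ^ 2 := by
    rw [mul_pow, hs2, hXdef]
  refine stmt9_core p a g h κ u v X
    (Real.sqrt (u ^ 2 + X ^ 2 / 2)) (Real.sqrt ((p / 6) / ζ * X ^ 2 + v ^ 2)) ζ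
    hp hg hh hζ hXdef hζdef (Real.sqrt_nonneg _) (Real.sqrt_nonneg _) ?_ ?_ ?_ ?_
  · exact Real.sq_sqrt (by positivity)
  · rw [Real.sq_sqrt (by positivity)]
    field_simp
  · rw [← e1]; exact hΞ
  · rw [← e2]; exact hΥ
end
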